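/- Let Δ ∈ ℝ with cos Δ ≠ 1. Then for every α ∈ ℂ, |⟪c(α), c(cos Δ · α)⟫|² · |⟪c(0), c(i · sin Δ · α)⟫|² = exp(−2|α|²(1 − cos Δ)), and this quantity tends to 0 as |α| → ∞. -/

import Mathlib

/-- The coherent state vector `c(α) ∈ ℓ²(ℕ, ℂ)`, whose `n`-th Fock-basis
coefficient is `exp(−|α|²/2) · αⁿ / √(n!)`. -/
noncomputable def coherent (α : ℂ) : lp (fun _ : ℕ => ℂ) 2 :=
  ⟨fun n => Complex.exp (-(((‖α‖) ^ 2 : ℝ) : ℂ) / 2) * α ^ n /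
      (Real.sqrt (Nat.factorial n) : ℂ), by
    apply memℓp_gen
    have hs : Summable (fun n : ℕ =>
        (Real.exp (-(‖α‖) ^ 2 / 2)) ^ 2 * ((‖α‖ ^ 2) ^ n / (Nat.factorial n))) := by
      exact (Real.summable_pow_div_factorial _).mul_left _
    apply hs.congr
    intro n
    have hfac : (0 : ℝ) < Real.sqrt (Nat.factorial n) := by positivity
    have h2 : (2 : ENNReal).toReal = ((2 : ℕ) : ℝ) := by norm_num
    rw [h2, Real.rpow_natCast]
    simp only [norm_div, norm_mul]
    rw [Complex.norm_exp]
    have hre : (-(((‖α‖) ^ 2 : ℝ) : ℂ) / 2).re = -(‖α‖) ^ 2 / 2 := by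
      simp [← Complex.ofReal_pow]
    rw [hre, norm_pow, Complex.norm_real, Real.norm_eq_abs, abs_of_pos hfac, eq_comm, div_pow, mul_pow,
      Real.sq_sqrt (Nat.cast_nonneg _)]
    ring⟩

/-!
Summing the Fock-basis series gives `⟪c(α), c(β)⟫ = exp(-(|α|² + |β|²)/2 + conj α · β)`, hence
`|⟪c(α), c(β)⟫|² = exp(-|β - α|²)`. The product of the two overlaps is therefore
`exp(-|α|² (|cos Δ - 1|² + sin² Δ)) = exp(-2|α|² (1 - cos Δ))`, a Gaussian in `|α|` that decays
because `1 - cos Δ > 0`.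
-/

open Complex ComplexConjugate Filter Topology Nat

lemma coherent_apply (α : ℂ) (n : ℕ) :
    coherent α n = exp (-((‖α‖ ^ 2 : ℝ) : ℂ) / 2) * α ^ n / (Real.sqrt n ! : ℂ) := rfl

lemma inner_coherent (α β : ℂ) :
    inner ℂ (coherent α) (coherent β) =
      exp (-((‖α‖ ^ 2 + ‖β‖ ^ 2 : ℝ) : ℂ) / 2 + conj α * β) := by
  have hprefactor : exp (-((‖α‖ ^ 2 : ℝ) : ℂ) / 2) * exp (-((‖β‖ ^ 2 : ℝ) : ℂ) / 2) =
      exp (-((‖α‖ ^ 2 + ‖β‖ ^ 2 : ℝ) : ℂ) / 2) := by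
    rw [← exp_add]; push_cast; ring_nf
  have hterm (n : ℕ) : inner ℂ (coherent α n) (coherent β n) =
      exp (-((‖α‖ ^ 2 + ‖β‖ ^ 2 : ℝ) : ℂ) / 2) * ((conj α * β) ^ n / n !) := by
    have hsqrt : (Real.sqrt n ! : ℂ) ^ 2 = n ! := by
      rw [← ofReal_pow, Real.sq_sqrt (Nat.cast_nonneg _), ofReal_natCast]
    have hne : (Real.sqrt n ! : ℂ) ≠ 0 := by simp [n.factorial_pos.ne']
    rw [← hprefactor, RCLike.inner_apply', coherent_apply, coherent_apply, map_div₀, map_mul,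
      map_pow, ← exp_conj, conj_ofReal]
    simp only [map_div₀, map_neg, conj_ofReal, map_ofNat]
    field_simp
    rw [hsqrt, mul_pow, mul_div_cancel_left₀ _ (Nat.cast_ne_zero.2 n.factorial_ne_zero)]
  have hsum := (NormedSpace.expSeries_div_hasSum_exp (conj α * β)).mul_left
    (exp (-((‖α‖ ^ 2 + ‖β‖ ^ 2 : ℝ) : ℂ) / 2))
  rw [← exp_eq_exp_ℂ, ← exp_add] at hsum
  exact (lp.hasSum_inner _ _).unique (by simpa only [hterm] using hsum)

lemma sq_norm_inner_coherent (α β : ℂ) :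
    ‖inner ℂ (coherent α) (coherent β)‖ ^ 2 = Real.exp (-‖β - α‖ ^ 2) := by
  rw [inner_coherent, norm_exp, sq, ← Real.exp_add]
  congr 1
  simp only [Complex.sq_norm, normSq_apply, add_re, neg_re, div_ofNat_re, ofReal_re, mul_re,
    conj_re, conj_im, sub_re, sub_im]
  ring

lemma norm_cos_mul_sub_sq_add_norm_I_sin_mul_sq (θ : ℝ) (z : ℂ) :
    ‖(Real.cos θ : ℂ) * z - z‖ ^ 2 + ‖I * (Real.sin θ : ℂ) * z‖ ^ 2 =
      2 * (1 - Real.cos θ) * ‖z‖ ^ 2 := by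
  have hsub : (Real.cos θ : ℂ) * z - z = ((Real.cos θ - 1 : ℝ) : ℂ) * z := by push_cast; ring
  rw [hsub, norm_mul, norm_mul, norm_mul, norm_I, norm_real, norm_real, Real.norm_eq_abs,
    Real.norm_eq_abs, one_mul, mul_pow, mul_pow, sq_abs, sq_abs]
  linear_combination ‖z‖ ^ 2 * Real.sin_sq_add_cos_sq θ

lemma tendsto_exp_mul_sq_norm_comap_norm_atTop {E : Type*} [Norm E] {c : ℝ} (hc : c < 0) :
    Tendsto (fun x : E => Real.exp (c * ‖x‖ ^ 2)) (comap (‖·‖) atTop) (𝓝 0) :=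
  Real.tendsto_exp_comp_nhds_zero.2 <|
    ((tendsto_pow_atTop two_ne_zero).comp tendsto_comap).const_mul_atTop_of_neg hc

/-- The fidelity between the outputs of an ideal and a mis-calibrated beamsplitter
on the input `|α⟩ ⊗ |0⟩` equals `exp(−2|α|²(1 − cos Δ))`, which tends to `0` as
`|α| → ∞` whenever `cos Δ ≠ 1`. -/
theorem miscalibrated_beamsplitter_fidelity (Δ : ℝ) (hΔ : Real.cos Δ ≠ 1) :
    (∀ α : ℂ,
      (‖(inner ℂ (coherent α) (coherent ((Real.cos Δ : ℂ) * α)) : ℂ)‖) ^ 2 *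
        (‖(inner ℂ (coherent 0) (coherent (Complex.I * (Real.sin Δ : ℂ) * α)) : ℂ)‖) ^ 2 =
        Real.exp (-2 * (‖α‖) ^ 2 * (1 - Real.cos Δ))) ∧
    Filter.Tendsto
      (fun α : ℂ =>
        (‖(inner ℂ (coherent α) (coherent ((Real.cos Δ : ℂ) * α)) : ℂ)‖) ^ 2 *
          (‖(inner ℂ (coherent 0) (coherent (Complex.I * (Real.sin Δ : ℂ) * α)) : ℂ)‖) ^ 2)
      (Filter.comap (fun z : ℂ => ‖z‖) Filter.atTop) (nhds 0) := by
  have hfidelity (α : ℂ) :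
      ‖inner ℂ (coherent α) (coherent ((Real.cos Δ : ℂ) * α))‖ ^ 2 *
        ‖inner ℂ (coherent 0) (coherent (I * (Real.sin Δ : ℂ) * α))‖ ^ 2 =
        Real.exp (-2 * ‖α‖ ^ 2 * (1 - Real.cos Δ)) := by
    rw [sq_norm_inner_coherent, sq_norm_inner_coherent, ← Real.exp_add, sub_zero, ← neg_add,
      norm_cos_mul_sub_sq_add_norm_I_sin_mul_sq]
    congr 1
    ring
  have hcos : -2 * (1 - Real.cos Δ) < 0 := by linarith [(Real.cos_le_one Δ).lt_of_ne hΔ]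
  refine ⟨hfidelity, ?_⟩
  simp_rw [hfidelity, mul_right_comm _ (‖_‖ ^ 2)]
  exact tendsto_exp_mul_sq_norm_comap_norm_atTop hcos
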